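/- arXiv:1812.01236 — 10 statements merged into one kernel-verified Lean document; each statement's English description precedes it below -/
import Mathlib

section
/- The problem Inf_Q(P) always has a unique optimal solution: there exists a feasible point x* = (x_0*, x̄*) such that x_0 ≤ x_0* for every feasible x, and any two optimal solutions of Inf_Q(P) are equal. -/
/-!
For each base point `v`, the points `(t, v)` below every `p i` are those with `t ≤ h v`, where
`h v = min_i (p_{i0} - ‖p̄_i - v‖)`. The function `h` is continuous and tends to `-∞` at
infinity, so it attains its maximum; the maximiser gives an optimal point. Two optimal points
have the same height, and if their base points differed, strict convexity of the norm would put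
their midpoint strictly inside every cone `p i - Q`, so that the height could be raised there.
-/

open Filter

namespace SecondOrderCone

variable {ι E : Type*} [Fintype ι] [Nonempty ι] [NormedAddCommGroup E]

def IsLowerBound (p : ι → ℝ × E) (x : ℝ × E) : Prop :=
  ∀ i, ‖(p i).2 - x.2‖ ≤ (p i).1 - x.1

noncomputable def height (p : ι → ℝ × E) (v : E) : ℝ :=
  Finset.univ.inf' Finset.univ_nonempty fun i => (p i).1 - ‖(p i).2 - v‖

variable (p : ι → ℝ × E)

theorem isLowerBound_iff_le_height (x : ℝ × E) : IsLowerBound p x ↔ x.1 ≤ height p x.2 := by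
  simp only [IsLowerBound, height, Finset.le_inf'_iff, Finset.mem_univ, true_implies, le_sub_comm]

theorem isLowerBound_height (v : E) : IsLowerBound p (height p v, v) :=
  (isLowerBound_iff_le_height p _).2 le_rfl

theorem height_le (v : E) (i : ι) : height p v ≤ (p i).1 - ‖(p i).2 - v‖ :=
  Finset.inf'_le _ (Finset.mem_univ i)

theorem continuous_height : Continuous (height p) :=
  Continuous.finset_inf'_apply _ fun i _ => by fun_prop

theorem tendsto_height_cocompact [ProperSpace E] : Tendsto (height p) (cocompact E) atBot := by
  let i : ι := Classical.arbitrary ι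
  have hbound : ∀ v, height p v ≤ ((p i).1 + ‖(p i).2‖) + -‖v‖ := fun v => by
    linarith [height_le p v i, norm_sub_norm_le v (p i).2, norm_sub_rev v (p i).2]
  exact tendsto_atBot_mono hbound <| tendsto_atBot_add_const_left _ _ <|
    tendsto_neg_atTop_atBot.comp tendsto_norm_cocompact_atTop

theorem lt_height_midpoint [NormedSpace ℝ E] [StrictConvexSpace ℝ E] {x y : ℝ × E}
    (hx : IsLowerBound p x) (hy : IsLowerBound p y) (h₁ : x.1 = y.1) (h₂ : x.2 ≠ y.2) :
    x.1 < height p ((2⁻¹ : ℝ) • x.2 + (2⁻¹ : ℝ) • y.2) := by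
  refine (Finset.lt_inf'_iff _).2 fun i _ => lt_sub_comm.1 ?_
  have hmid : (p i).2 - ((2⁻¹ : ℝ) • x.2 + (2⁻¹ : ℝ) • y.2)
      = (2⁻¹ : ℝ) • ((p i).2 - x.2) + (2⁻¹ : ℝ) • ((p i).2 - y.2) := by module
  rw [hmid]
  exact norm_combo_lt_of_ne (hx i) (h₁ ▸ hy i) (by simpa using h₂) (by norm_num) (by norm_num)
    (by norm_num)

theorem existsUnique_isGreatest [NormedSpace ℝ E] [ProperSpace E] [StrictConvexSpace ℝ E] :
    ∃! x : ℝ × E, IsLowerBound p x ∧ ∀ y, IsLowerBound p y → y.1 ≤ x.1 := by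
  obtain ⟨v, hv⟩ := (continuous_height p).exists_forall_ge (tendsto_height_cocompact p)
  refine ⟨(height p v, v), ⟨isLowerBound_height p v, fun y hy => ?_⟩, ?_⟩
  · exact ((isLowerBound_iff_le_height p y).1 hy).trans (hv y.2)
  rintro x ⟨hx, hx_max⟩
  have hx₁ : x.1 = height p v :=
    le_antisymm (((isLowerBound_iff_le_height p x).1 hx).trans (hv x.2))
      (hx_max _ (isLowerBound_height p v))
  refine Prod.ext hx₁ (by_contra fun hne => ?_)
  have hlt := lt_height_midpoint p hx (isLowerBound_height p v) hx₁ hne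
  exact hlt.not_ge (hx_max _ (isLowerBound_height p _))

end SecondOrderCone

theorem stmt_0_general (d m : ℕ) (hm : 1 ≤ m)
    (p : Fin m → ℝ × EuclideanSpace ℝ (Fin d)) :
    ∃! x : ℝ × EuclideanSpace ℝ (Fin d),
      (∀ i, ‖(p i).2 - x.2‖ ≤ (p i).1 - x.1) ∧
      ∀ y : ℝ × EuclideanSpace ℝ (Fin d),
        (∀ i, ‖(p i).2 - y.2‖ ≤ (p i).1 - y.1) → y.1 ≤ x.1 :=
  have : Nonempty (Fin m) := ⟨⟨0, hm⟩⟩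
  SecondOrderCone.existsUnique_isGreatest p

/-- The problem `Inf_Q(P)` always has a unique optimal solution: there exists a feasible
point `x*` such that `x_0 ≤ x_0*` for every feasible `x`, and any two optimal solutions
coincide. -/
theorem stmt_0 (d m : ℕ) (hd : 1 ≤ d) (hm : 1 ≤ m)
    (p : Fin m → ℝ × EuclideanSpace ℝ (Fin d)) :
    ∃! x : ℝ × EuclideanSpace ℝ (Fin d),
      (∀ i, ‖(p i).2 - x.2‖ ≤ (p i).1 - x.1) ∧
      ∀ y : ℝ × EuclideanSpace ℝ (Fin d),
        (∀ i, ‖(p i).2 - y.2‖ ≤ (p i).1 - y.1) → y.1 ≤ x.1 :=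
  stmt_0_general d m hm p
end

section
/- Let x* ∈ ℝ × ℝ^d and y_1*, …, y_m* ∈ ℝ × ℝ^d. Then x* is optimal for Inf_Q(P) and y* = (y_1*, …, y_m*) is dual optimal if and only if the following three conditions hold: (i) primal feasibility: ‖p̄_i − x̄*‖ ≤ p_{i0} − x_0* for all i; (ii) dual feasibility: Σ_i y_{i0}* = 1, Σ_i ȳ_i* = 0, and ‖ȳ_i*‖ ≤ y_{i0}* for all i; (iii) complementary slackness: (p_{i0} − x_0*)·y_{i0}* + ⟨p̄_i − x̄*, ȳ_i*⟩ = 0 for all i. -/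
/-- A point `x` is primal feasible for `Inf_Q(P)`. -/
def PrimalFeasible {d m : ℕ} (p : Fin m → ℝ × EuclideanSpace ℝ (Fin d))
    (x : ℝ × EuclideanSpace ℝ (Fin d)) : Prop :=
  ∀ i, ‖(p i).2 - x.2‖ ≤ (p i).1 - x.1

/-- `x` is optimal for `Inf_Q(P)`. -/
def PrimalOptimal {d m : ℕ} (p : Fin m → ℝ × EuclideanSpace ℝ (Fin d))
    (x : ℝ × EuclideanSpace ℝ (Fin d)) : Prop :=
  PrimalFeasible p x ∧ ∀ x', PrimalFeasible p x' → x'.1 ≤ x.1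

/-- `y` is feasible for the dual problem (D). -/
def DualFeasible {d m : ℕ} (y : Fin m → ℝ × EuclideanSpace ℝ (Fin d)) : Prop :=
  (∑ i, (y i).1) = 1 ∧ (∑ i, (y i).2) = 0 ∧ ∀ i, ‖(y i).2‖ ≤ (y i).1

/-- The dual objective function of (D). -/
noncomputable def DualObj {d m : ℕ} (p y : Fin m → ℝ × EuclideanSpace ℝ (Fin d)) : ℝ :=
  ∑ i, ((p i).1 * (y i).1 + (inner ℝ (p i).2 (y i).2 : ℝ))

/-- `y` is optimal for the dual problem (D). -/
def DualOptimal {d m : ℕ} (p y : Fin m → ℝ × EuclideanSpace ℝ (Fin d)) : Prop :=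
  DualFeasible y ∧ ∀ y', DualFeasible y' → DualObj p y ≤ DualObj p y'

/-!
For feasible `x` and `y`, bilinearity gives `DualObj p y - x.1 = ∑ i, ⟨p i - x, y i⟩`, and each
term is nonnegative because the second-order cone `{s | ‖s.2‖ ≤ s.1}` is self-dual. Hence a
feasible pair with vanishing slack terms is optimal, and an optimal pair is one with equal
objective values, i.e. with vanishing slack terms, provided the optimal values agree.

They do: at an optimal `x`, the origin lies in the convex hull of the unit vectors
`u i = (p̄ i - x̄) / ‖p̄ i - x̄‖` of the active constraints. Otherwise a vector `v` separating `0`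
from them is a direction along which `x̄` can move while every constraint gains slack, so `x.1`
could be increased. Convex weights `λ` with `∑ λ i • u i = 0` give the dual solution
`y i = (λ i, -λ i • u i)` with zero slack terms.
-/

open Filter Topology NormedSpace RealInnerProductSpace

section InnerProductSpace

variable {E : Type*} [NormedAddCommGroup E] [InnerProductSpace ℝ E]

/-- The Euclidean inner product of `ℝ × E`, written out since `ℝ × E` carries the sup norm. -/
def prodInner (s y : ℝ × E) : ℝ := s.1 * y.1 + ⟪s.2, y.2⟫

lemma prodInner_sub_left (s t y : ℝ × E) :
    prodInner (s - t) y = prodInner s y - prodInner t y := by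
  simp only [prodInner, Prod.fst_sub, Prod.snd_sub, inner_sub_left]
  ring

lemma prodInner_nonneg {s y : ℝ × E} (hs : ‖s.2‖ ≤ s.1) (hy : ‖y.2‖ ≤ y.1) :
    0 ≤ prodInner s y := by
  have hcs := neg_le_of_abs_le (abs_real_inner_le_norm s.2 y.2)
  have hmul : ‖s.2‖ * ‖y.2‖ ≤ s.1 * y.1 :=
    mul_le_mul hs hy (norm_nonneg _) ((norm_nonneg _).trans hs)
  unfold prodInner
  linarith

lemma norm_normalize_le_one (a : E) : ‖normalize a‖ ≤ 1 := by
  rcases eq_or_ne a 0 with rfl | ha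
  · simp
  · exact (norm_normalize ha).le

lemma real_inner_normalize_self (a : E) : ⟪a, normalize a⟫ = ‖a‖ := by
  rcases eq_or_ne a 0 with rfl | ha
  · simp
  · rw [NormedSpace.normalize, real_inner_smul_right, real_inner_self_eq_norm_sq]
    field_simp [norm_ne_zero_iff.mpr ha]

lemma eventually_norm_sub_smul_le_of_norm_lt {a : E} {r : ℝ} (h : ‖a‖ < r) (v : E) (c : ℝ) :
    ∀ᶠ t in 𝓝 (0 : ℝ), ‖a - t • v‖ ≤ r - t * c / 2 := by
  have hcont : Continuous fun t : ℝ => ‖a - t • v‖ + t * c / 2 := by fun_prop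
  have h0 : ‖a - (0 : ℝ) • v‖ + 0 * c / 2 < r := by simpa using h
  filter_upwards [hcont.continuousAt.eventually_lt continuousAt_const h0] with t ht
  linarith

lemma eventually_norm_sub_smul_le {a v : E} {c : ℝ} (hc : 0 < c) (hv : c < ⟪v, normalize a⟫) :
    ∀ᶠ t in 𝓝[>] (0 : ℝ), ‖a - t • v‖ ≤ ‖a‖ - t * c / 2 := by
  have ha : 0 < ‖a‖ := by
    refine norm_pos_iff.mpr fun ha => ?_
    simp only [ha, normalize_zero_eq_zero, inner_zero_right] at hv
    linarith
  have hav : ‖a‖ * c ≤ ⟪v, a⟫ := by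
    have := mul_le_mul_of_nonneg_left hv.le ha.le
    rwa [NormedSpace.normalize, real_inner_smul_right, ← mul_assoc, mul_inv_cancel₀ ha.ne',
      one_mul] at this
  have h₁ : ∀ᶠ t in 𝓝 (0 : ℝ), t * c < 2 * ‖a‖ :=
    (continuous_id.mul continuous_const).continuousAt.eventually_lt continuousAt_const
      (by simpa using ha)
  have h₂ : ∀ᶠ t in 𝓝 (0 : ℝ), t * ‖v‖ ^ 2 < ‖a‖ * c :=
    (continuous_id.mul continuous_const).continuousAt.eventually_lt continuousAt_const
      (by simpa using mul_pos ha hc)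
  filter_upwards [self_mem_nhdsWithin, nhdsWithin_le_nhds h₁, nhdsWithin_le_nhds h₂]
    with t (ht : 0 < t) h₁ h₂
  rw [← pow_le_pow_iff_left₀ (norm_nonneg _) (by linarith) two_ne_zero, norm_sub_sq_real,
    real_inner_smul_right, norm_smul, mul_pow, Real.norm_eq_abs, sq_abs, real_inner_comm]
  nlinarith [mul_le_mul_of_nonneg_left hav ht.le, mul_le_mul_of_nonneg_left h₂.le ht.le,
    sq_nonneg (t * c)]

lemma exists_forall_lt_inner_of_zero_notMem_convexHull [CompleteSpace E] {S : Set E}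
    (hS : S.Finite) (h : (0 : E) ∉ convexHull ℝ S) :
    ∃ v : E, ∃ c, 0 < c ∧ ∀ z ∈ S, c < ⟪v, z⟫ := by
  obtain ⟨f, c, hf₀, hf⟩ :=
    geometric_hahn_banach_point_closed (convex_convexHull ℝ S) (hS.isClosed_convexHull ℝ) h
  refine ⟨(InnerProductSpace.toDual ℝ E).symm f, c, by simpa using hf₀, fun z hz => ?_⟩
  rw [InnerProductSpace.toDual_symm_apply]
  exact hf z (subset_convexHull ℝ S hz)

lemma exists_weights_of_mem_convexHull_image {ι : Type*} [Fintype ι] {s : Set ι} {u : ι → E}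
    {z : E} (hz : z ∈ convexHull ℝ (u '' s)) :
    ∃ w : ι → ℝ, (∀ i, 0 ≤ w i) ∧ (∀ i ∉ s, w i = 0) ∧ ∑ i, w i = 1 ∧ ∑ i, w i • u i = z := by
  classical
  suffices convexHull ℝ (u '' s) ⊆ {z | ∃ w : ι → ℝ, (∀ i, 0 ≤ w i) ∧ (∀ i ∉ s, w i = 0) ∧
      ∑ i, w i = 1 ∧ ∑ i, w i • u i = z} from this hz
  refine convexHull_min ?_ ?_
  · rintro _ ⟨i, hi, rfl⟩
    refine ⟨Pi.single i 1, fun j => ?_, fun j hj => ?_, by simp, by simp [Pi.single_apply]⟩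
    · by_cases hji : j = i <;> simp [hji]
    · simp [show j ≠ i from fun h => hj (h ▸ hi)]
  · rintro _ ⟨w, hw₀, hws, hw₁, rfl⟩ _ ⟨w', hw₀', hws', hw₁', rfl⟩ a b ha hb hab
    refine ⟨a • w + b • w', fun i => ?_, fun i hi => ?_, ?_, ?_⟩
    · simp only [Pi.add_apply, Pi.smul_apply, smul_eq_mul]
      exact add_nonneg (mul_nonneg ha (hw₀ i)) (mul_nonneg hb (hw₀' i))
    · simp [hws i hi, hws' i hi]
    · simp [Finset.sum_add_distrib, ← Finset.mul_sum, hw₁, hw₁', hab]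
    · simp [add_smul, mul_smul, Finset.sum_add_distrib, ← Finset.smul_sum]

end InnerProductSpace

section InfQ

variable {d m : ℕ} {p : Fin m → ℝ × EuclideanSpace ℝ (Fin d)}
  {x : ℝ × EuclideanSpace ℝ (Fin d)} {y : Fin m → ℝ × EuclideanSpace ℝ (Fin d)}

lemma DualFeasible.dualObj_sub_eq (hy : DualFeasible y) (p : Fin m → ℝ × EuclideanSpace ℝ (Fin d))
    (x : ℝ × EuclideanSpace ℝ (Fin d)) :
    DualObj p y - x.1 = ∑ i, prodInner (p i - x) (y i) := by
  have hx : ∑ i, prodInner x (y i) = x.1 := by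
    simp [prodInner, Finset.sum_add_distrib, ← Finset.mul_sum, ← inner_sum, hy.1, hy.2.1]
  simp only [prodInner_sub_left, Finset.sum_sub_distrib, hx]
  rfl

lemma PrimalFeasible.le_dualObj (hx : PrimalFeasible p x) (hy : DualFeasible y) :
    x.1 ≤ DualObj p y := by
  have := hy.dualObj_sub_eq p x
  have := Finset.sum_nonneg fun i (_ : i ∈ Finset.univ) =>
    prodInner_nonneg (s := p i - x) (hx i) (hy.2.2 i)
  linarith

lemma PrimalFeasible.dualObj_eq_iff (hx : PrimalFeasible p x) (hy : DualFeasible y) :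
    DualObj p y = x.1 ↔ ∀ i, prodInner (p i - x) (y i) = 0 := by
  rw [← sub_eq_zero, hy.dualObj_sub_eq p x, Finset.sum_eq_zero_iff_of_nonneg fun i _ =>
    prodInner_nonneg (s := p i - x) (hx i) (hy.2.2 i)]
  simp

lemma PrimalOptimal.zero_mem_convexHull (hx : PrimalOptimal p x) :
    (0 : EuclideanSpace ℝ (Fin d)) ∈ convexHull ℝ ((fun i => normalize ((p i).2 - x.2)) ''
      {i | ‖(p i).2 - x.2‖ = (p i).1 - x.1}) := by
  by_contra h
  obtain ⟨v, c, hc, hv⟩ := exists_forall_lt_inner_of_zero_notMem_convexHull (Set.toFinite _) h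
  have hstep : ∀ i, ∀ᶠ t in 𝓝[>] (0 : ℝ),
      ‖(p i).2 - x.2 - t • v‖ ≤ (p i).1 - x.1 - t * c / 2 := by
    intro i
    rcases (hx.1 i).lt_or_eq with hlt | heq
    · exact nhdsWithin_le_nhds (eventually_norm_sub_smul_le_of_norm_lt hlt v c)
    · rw [← heq]
      exact eventually_norm_sub_smul_le hc (hv _ ⟨i, heq, rfl⟩)
  obtain ⟨t, hfeas, ht⟩ := ((eventually_all.2 hstep).and self_mem_nhdsWithin).exists
  have hle : x.1 + t * c / 2 ≤ x.1 := hx.2 (x.1 + t * c / 2, x.2 + t • v) fun i => by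
    simpa only [sub_add_eq_sub_sub] using hfeas i
  linarith [mul_pos ht hc]

lemma PrimalOptimal.exists_dualFeasible_prodInner_eq_zero (hx : PrimalOptimal p x) :
    ∃ y, DualFeasible y ∧ ∀ i, prodInner (p i - x) (y i) = 0 := by
  obtain ⟨w, hw₀, hw_active, hw₁, hw⟩ :=
    exists_weights_of_mem_convexHull_image hx.zero_mem_convexHull
  refine ⟨fun i => (w i, -(w i • normalize ((p i).2 - x.2))),
    ⟨hw₁, by simp [Finset.sum_neg_distrib, hw], fun i => ?_⟩, fun i => ?_⟩
  · rw [norm_neg, norm_smul, Real.norm_of_nonneg (hw₀ i)]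
    exact mul_le_of_le_one_right (hw₀ i) (norm_normalize_le_one _)
  · by_cases hi : ‖(p i).2 - x.2‖ = (p i).1 - x.1
    · simp only [prodInner, Prod.fst_sub, Prod.snd_sub, inner_neg_right, real_inner_smul_right,
        real_inner_normalize_self, hi]
      ring
    · simp [prodInner, hw_active i hi]

end InfQ

theorem stmt_4_general (d m : ℕ)
    (p : Fin m → ℝ × EuclideanSpace ℝ (Fin d))
    (x : ℝ × EuclideanSpace ℝ (Fin d))
    (y : Fin m → ℝ × EuclideanSpace ℝ (Fin d)) :
    (PrimalOptimal p x ∧ DualOptimal p y) ↔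
      (PrimalFeasible p x ∧ DualFeasible y ∧
        ∀ i, ((p i).1 - x.1) * (y i).1 + (inner ℝ ((p i).2 - x.2) (y i).2 : ℝ) = 0) := by
  constructor
  · rintro ⟨hx, hy⟩
    obtain ⟨y', hy', hslack'⟩ := hx.exists_dualFeasible_prodInner_eq_zero
    have hobj : DualObj p y = x.1 :=
      le_antisymm (((hx.1.dualObj_eq_iff hy').2 hslack') ▸ hy.2 y' hy') (hx.1.le_dualObj hy.1)
    exact ⟨hx.1, hy.1, (hx.1.dualObj_eq_iff hy.1).1 hobj⟩
  · rintro ⟨hx, hy, hslack⟩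
    have hobj : DualObj p y = x.1 := (hx.dualObj_eq_iff hy).2 hslack
    exact ⟨⟨hx, fun x' hx' => hobj ▸ hx'.le_dualObj hy⟩,
      ⟨hy, fun y' hy' => hobj ▸ hx.le_dualObj hy'⟩⟩

/-- Optimality conditions: `(x, y)` is a primal-dual optimal pair iff primal feasibility,
dual feasibility and complementary slackness hold. -/
theorem stmt_4 (d m : ℕ) (hd : 1 ≤ d) (hm : 1 ≤ m)
    (p : Fin m → ℝ × EuclideanSpace ℝ (Fin d))
    (x : ℝ × EuclideanSpace ℝ (Fin d))
    (y : Fin m → ℝ × EuclideanSpace ℝ (Fin d)) :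
    (PrimalOptimal p x ∧ DualOptimal p y) ↔
      (PrimalFeasible p x ∧ DualFeasible y ∧
        ∀ i, ((p i).1 - x.1) * (y i).1 + (inner ℝ ((p i).2 - x.2) (y i).2 : ℝ) = 0) :=
  stmt_4_general d m p x y
end

section
/- A point x* = (x_0*, x̄*) is the optimal solution of Inf_Q(P) if and only if ‖p̄_i − x̄*‖ ≤ p_{i0} − x_0* for all i = 1, …, m, and x̄* lies in the convex hull of the set {p̄_i : ‖p̄_i − x̄*‖ = p_{i0} − x_0*}. -/
/-!
Moving `x̄` to `ȳ` strictly decreases the distance to `p̄_i` exactly when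
`‖ȳ - x̄‖² < 2 ⟪ȳ - x̄, p̄_i - x̄⟫`. If a feasible `y` had `y_0 > x_0`, every active `p̄_i` would
be strictly closer to `ȳ` than to `x̄`, so the active points lie in the open half-space
`⟪ȳ - x̄, · - x̄⟫ > 0`, and so does their convex hull, which cannot then contain `x̄`.
Conversely, if `x̄` is not in that convex hull, projecting `x̄` onto it gives a direction `v`
with `⟪v, p̄_i - x̄⟫ > 0` for all active `i`; a short step along `v` makes every constraint
strict (the inactive ones by continuity), after which `x_0` itself can be raised.
-/

open Filter Topology RealInnerProductSpace

section InnerProductSpace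

variable {E : Type*} [NormedAddCommGroup E] [InnerProductSpace ℝ E]

theorem norm_sub_lt_norm_sub_iff {a x y : E} :
    ‖a - y‖ < ‖a - x‖ ↔ ‖y - x‖ ^ 2 < 2 * ⟪y - x, a - x⟫ := by
  have hexp : ‖a - y‖ ^ 2 = ‖a - x‖ ^ 2 - 2 * ⟪a - x, y - x⟫ + ‖y - x‖ ^ 2 := by
    rw [← norm_sub_sq_real, sub_sub_sub_cancel_right]
  rw [← pow_lt_pow_iff_left₀ (norm_nonneg _) (norm_nonneg _) two_ne_zero, hexp,
    real_inner_comm]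
  constructor <;> intro h <;> linarith

theorem eventually_norm_sub_add_smul_lt {a x v : E} (h : 0 < ⟪v, a - x⟫) :
    ∀ᶠ t in 𝓝[>] (0 : ℝ), ‖a - (x + t • v)‖ < ‖a - x‖ := by
  have hsmall : ∀ᶠ t in 𝓝 (0 : ℝ), t * ‖v‖ ^ 2 < 2 * ⟪v, a - x⟫ := by
    have hcont : Continuous fun t : ℝ => t * ‖v‖ ^ 2 := by fun_prop
    exact hcont.continuousAt.eventually_lt continuousAt_const (by rw [zero_mul]; linarith)
  filter_upwards [hsmall.filter_mono nhdsWithin_le_nhds, self_mem_nhdsWithin]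
    with t ht (htpos : 0 < t)
  rw [norm_sub_lt_norm_sub_iff, add_sub_cancel_left, norm_smul, real_inner_smul_left,
    Real.norm_of_nonneg htpos.le]
  nlinarith

theorem exists_inner_pos_of_notMem_convexHull {s : Set E} (hs : s.Finite) {x : E}
    (hx : x ∉ convexHull ℝ s) : ∃ v : E, ∀ a ∈ s, 0 < ⟪v, a - x⟫ := by
  rcases s.eq_empty_or_nonempty with rfl | hne
  · exact ⟨0, by simp⟩
  obtain ⟨u, hu, hmin⟩ := exists_norm_eq_iInf_of_complete_convex
    (hne.mono (subset_convexHull ℝ s)) (hs.isCompact_convexHull ℝ).isComplete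
    (convex_convexHull ℝ s) x
  have hobtuse := (norm_eq_iInf_iff_real_inner_le_zero (convex_convexHull ℝ s) hu).1 hmin
  have hux : u - x ≠ 0 := sub_ne_zero.2 fun h => hx (h ▸ hu)
  refine ⟨u - x, fun a ha => ?_⟩
  have hau : 0 ≤ ⟪u - x, a - u⟫ := by
    rw [← neg_sub x u, inner_neg_left, neg_nonneg]
    exact hobtuse a (subset_convexHull ℝ s ha)
  calc 0 < ‖u - x‖ ^ 2 := pow_pos (norm_pos_iff.2 hux) 2
    _ ≤ ⟪u - x, a - u⟫ + ⟪u - x, u - x⟫ := by rw [real_inner_self_eq_norm_sq]; linarith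
    _ = ⟪u - x, a - x⟫ := by rw [← inner_add_right, sub_add_sub_cancel]

end InnerProductSpace

namespace InfQ

variable {ι E : Type*} [NormedAddCommGroup E]

def Feasible (p : ι → ℝ × E) (x : ℝ × E) : Prop :=
  ∀ i, ‖(p i).2 - x.2‖ ≤ (p i).1 - x.1

def activeSet (p : ι → ℝ × E) (x : ℝ × E) : Set E :=
  {q | ∃ i, (p i).2 = q ∧ ‖(p i).2 - x.2‖ = (p i).1 - x.1}

theorem activeSet_finite [Finite ι] (p : ι → ℝ × E) (x : ℝ × E) : (activeSet p x).Finite :=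
  (Set.finite_range fun i => (p i).2).subset fun _ ⟨i, hq, _⟩ => ⟨i, hq⟩

theorem exists_feasible_fst_gt [Finite ι] {p : ι → ℝ × E} {s : ℝ} {z : E}
    (hz : ∀ i, ‖(p i).2 - z‖ < (p i).1 - s) : ∃ y, Feasible p y ∧ s < y.1 := by
  have hnear : ∀ᶠ s' in 𝓝 s, ∀ i, ‖(p i).2 - z‖ < (p i).1 - s' :=
    eventually_all.2 fun i => (eventually_lt_nhds (lt_sub_comm.1 (hz i))).mono
      fun _ h => lt_sub_comm.1 h
  obtain ⟨s', hs', hss'⟩ := ((hnear.filter_mono nhdsWithin_le_nhds).and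
    (eventually_mem_nhdsWithin (s := Set.Ioi s))).exists
  exact ⟨(s', z), fun i => (hs' i).le, hss'⟩

variable [InnerProductSpace ℝ E]

theorem fst_le_of_mem_convexHull_activeSet {p : ι → ℝ × E} {x y : ℝ × E} (hy : Feasible p y)
    (hx : x.2 ∈ convexHull ℝ (activeSet p x)) : y.1 ≤ x.1 := by
  by_contra! hlt
  have hactive : activeSet p x ⊆ {a | ⟪y.2 - x.2, x.2⟫ < ⟪y.2 - x.2, a⟫} := by
    rintro _ ⟨i, rfl, hi⟩
    have hcloser : ‖(p i).2 - y.2‖ < ‖(p i).2 - x.2‖ := by linarith [hy i]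
    have hinner := norm_sub_lt_norm_sub_iff.1 hcloser
    rw [inner_sub_right] at hinner
    have := sq_nonneg ‖y.2 - x.2‖
    rw [Set.mem_ofPred_eq]
    linarith
  have hconvex := convex_halfSpace_gt (innerₛₗ ℝ (y.2 - x.2)).isLinear ⟪y.2 - x.2, x.2⟫
  exact lt_irrefl ⟪y.2 - x.2, x.2⟫ (convexHull_min hactive hconvex hx)

theorem exists_strictly_feasible_of_notMem_convexHull [Finite ι] {p : ι → ℝ × E} {x : ℝ × E}
    (hx : Feasible p x) (hmem : x.2 ∉ convexHull ℝ (activeSet p x)) :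
    ∃ z : E, ∀ i, ‖(p i).2 - z‖ < (p i).1 - x.1 := by
  obtain ⟨v, hv⟩ := exists_inner_pos_of_notMem_convexHull (activeSet_finite p x) hmem
  have hstep : ∀ i, ∀ᶠ t in 𝓝[>] (0 : ℝ), ‖(p i).2 - (x.2 + t • v)‖ < (p i).1 - x.1 := by
    intro i
    rcases (hx i).eq_or_lt with hact | hslack
    · rw [← hact]
      exact eventually_norm_sub_add_smul_lt (hv _ ⟨i, rfl, hact⟩)
    · have hcont : Continuous fun t : ℝ => ‖(p i).2 - (x.2 + t • v)‖ := by fun_prop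
      refine (hcont.continuousAt.eventually_lt continuousAt_const ?_).filter_mono
        nhdsWithin_le_nhds
      simpa using hslack
  obtain ⟨t, ht⟩ := (eventually_all.2 hstep).exists
  exact ⟨x.2 + t • v, ht⟩

end InfQ

open InfQ in
theorem stmt_7_general (d m : ℕ)
    (p : Fin m → ℝ × EuclideanSpace ℝ (Fin d))
    (x : ℝ × EuclideanSpace ℝ (Fin d)) :
    ((∀ i, ‖(p i).2 - x.2‖ ≤ (p i).1 - x.1) ∧
      ∀ y : ℝ × EuclideanSpace ℝ (Fin d),
        (∀ i, ‖(p i).2 - y.2‖ ≤ (p i).1 - y.1) → y.1 ≤ x.1)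
    ↔ ((∀ i, ‖(p i).2 - x.2‖ ≤ (p i).1 - x.1) ∧
        x.2 ∈ convexHull ℝ
          {q | ∃ i, (p i).2 = q ∧ ‖(p i).2 - x.2‖ = (p i).1 - x.1}) := by
  refine and_congr_right fun hx => ⟨fun hopt => ?_, fun hmem y hy => ?_⟩
  · by_contra hmem
    obtain ⟨z, hz⟩ := exists_strictly_feasible_of_notMem_convexHull hx hmem
    obtain ⟨y, hy, hlt⟩ := exists_feasible_fst_gt hz
    exact (hopt y hy).not_gt hlt
  · exact fst_le_of_mem_convexHull_activeSet hy hmem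

/-- `x` is the optimal solution of `Inf_Q(P)` iff `x` is feasible and `x̄` lies in the
convex hull of the points `p̄_i` whose constraints are active at `x`. -/
theorem stmt_7 (d m : ℕ) (hd : 1 ≤ d) (hm : 1 ≤ m)
    (p : Fin m → ℝ × EuclideanSpace ℝ (Fin d))
    (x : ℝ × EuclideanSpace ℝ (Fin d)) :
    ((∀ i, ‖(p i).2 - x.2‖ ≤ (p i).1 - x.1) ∧
      ∀ y : ℝ × EuclideanSpace ℝ (Fin d),
        (∀ i, ‖(p i).2 - y.2‖ ≤ (p i).1 - y.1) → y.1 ≤ x.1)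
    ↔ ((∀ i, ‖(p i).2 - x.2‖ ≤ (p i).1 - x.1) ∧
        x.2 ∈ convexHull ℝ
          {q | ∃ i, (p i).2 = q ∧ ‖(p i).2 - x.2‖ = (p i).1 - x.1}) :=
  stmt_7_general d m p x
end

section
/- Let x = (x_0, x̄) ∈ ℝ × ℝ^d (not necessarily feasible) and let I = {i : ‖p̄_i − x̄‖ = p_{i0} − x_0}. Assume p_{i0} − x_0 > 0 for all i ∈ I, and that there are real coefficients α_i (i ∈ I) with Σ_{i∈I} α_i = 1 and x̄ = Σ_{i∈I} α_i p̄_i, and that D := Σ_{j∈I} α_j (p_{j0} − x_0) ≠ 0. Define y_i = (0, 0) for i ∉ I and, for i ∈ I, y_{i0} = α_i (p_{i0} − x_0)/D and ȳ_i = (y_{i0}/(p_{i0} − x_0))·(x̄ − p̄_i). Then Σ_{i=1}^m y_{i0} = 1, Σ_{i=1}^m ȳ_i = 0, and the complementary slackness conditions (p_{i0} − x_0)·y_{i0} + ⟨p̄_i − x̄, ȳ_i⟩ = 0 hold for every i = 1, …, m. -/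
/-! The dual vector is `y_i = (α_i / D) · (p_{i0} − x_0, x̄ − p̄_i)` on `I`. Its first coordinates
sum to `D / D = 1`; its second coordinates sum to `(1 / D) Σ α_i (x̄ − p̄_i) = 0` because `x̄` is the
affine combination `Σ α_i p̄_i`; and complementary slackness on `I` is the identity
`t s − (s / t) ‖p̄_i − x̄‖² = 0` for `t = p_{i0} − x_0 = ‖p̄_i − x̄‖`. -/

open Finset

theorem sum_smul_sub_eq_zero_of_sum_eq_one {R E ι : Type*} [Ring R] [AddCommGroup E] [Module R E]
    {s : Finset ι} {w : ι → R} {p : ι → E} {x : E}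
    (hw : ∑ i ∈ s, w i = 1) (hx : x = ∑ i ∈ s, w i • p i) :
    ∑ i ∈ s, w i • (x - p i) = 0 := by
  simp only [smul_sub, sum_sub_distrib, ← sum_smul, hw, one_smul, ← hx, sub_self]

theorem mul_add_inner_div_smul_sub_eq_zero {E : Type*} [NormedAddCommGroup E]
    [InnerProductSpace ℝ E] {a b : E} {t : ℝ} (hab : ‖a - b‖ = t) (s : ℝ) :
    t * s + inner ℝ (a - b) ((s / t) • (b - a)) = 0 := by
  rw [inner_smul_right, ← neg_sub a b, inner_neg_right, real_inner_self_eq_norm_sq, hab]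
  field_simp
  ring

theorem stmt_9_general (d m : ℕ)
    (p : Fin m → ℝ × EuclideanSpace ℝ (Fin d))
    (x : ℝ × EuclideanSpace ℝ (Fin d))
    (I : Finset (Fin m))
    (hI : ∀ i, i ∈ I ↔ ‖(p i).2 - x.2‖ = (p i).1 - x.1)
    (hpos : ∀ i ∈ I, 0 < (p i).1 - x.1)
    (α : Fin m → ℝ)
    (hα1 : ∑ i ∈ I, α i = 1)
    (hα2 : x.2 = ∑ i ∈ I, α i • (p i).2)
    (D : ℝ) (hD : D = ∑ j ∈ I, α j * ((p j).1 - x.1)) (hD0 : D ≠ 0)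
    (y : Fin m → ℝ × EuclideanSpace ℝ (Fin d))
    (hy0 : ∀ i ∉ I, y i = 0)
    (hy1 : ∀ i ∈ I, (y i).1 = α i * ((p i).1 - x.1) / D)
    (hy2 : ∀ i ∈ I, (y i).2 = ((y i).1 / ((p i).1 - x.1)) • (x.2 - (p i).2)) :
    (∑ i, (y i).1) = 1 ∧ (∑ i, (y i).2) = 0 ∧
      ∀ i, ((p i).1 - x.1) * (y i).1 + (inner ℝ ((p i).2 - x.2) (y i).2 : ℝ) = 0 := by
  have hsupp : ∑ i, y i = ∑ i ∈ I, y i :=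
    (sum_subset (subset_univ I) fun i _ hi => hy0 i hi).symm
  have hy2' : ∀ i ∈ I, (y i).2 = D⁻¹ • α i • (x.2 - (p i).2) := fun i hi => by
    have := (hpos i hi).ne'
    rw [hy2 i hi, hy1 i hi, smul_smul]
    congr 1
    field_simp
  refine ⟨?_, ?_, fun i => ?_⟩
  · rw [← Prod.fst_sum, hsupp, Prod.fst_sum, sum_congr rfl hy1, ← sum_div, ← hD, div_self hD0]
  · rw [← Prod.snd_sum, hsupp, Prod.snd_sum, sum_congr rfl hy2', ← smul_sum,
      sum_smul_sub_eq_zero_of_sum_eq_one hα1 hα2, smul_zero]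
  · by_cases hi : i ∈ I
    · rw [hy2 i hi]
      exact mul_add_inner_div_smul_sub_eq_zero ((hI i).1 hi) _
    · simp [hy0 i hi]

/-- Corollary: from an affine combination `x̄ = Σ_{i∈I} α_i p̄_i` over the active index set
`I`, the indicated dual solution satisfies the dual equality constraints and complementary
slackness. -/
theorem stmt_9 (d m : ℕ) (hd : 1 ≤ d) (hm : 1 ≤ m)
    (p : Fin m → ℝ × EuclideanSpace ℝ (Fin d))
    (x : ℝ × EuclideanSpace ℝ (Fin d))
    (I : Finset (Fin m))
    (hI : ∀ i, i ∈ I ↔ ‖(p i).2 - x.2‖ = (p i).1 - x.1)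
    (hpos : ∀ i ∈ I, 0 < (p i).1 - x.1)
    (α : Fin m → ℝ)
    (hα1 : ∑ i ∈ I, α i = 1)
    (hα2 : x.2 = ∑ i ∈ I, α i • (p i).2)
    (D : ℝ) (hD : D = ∑ j ∈ I, α j * ((p j).1 - x.1)) (hD0 : D ≠ 0)
    (y : Fin m → ℝ × EuclideanSpace ℝ (Fin d))
    (hy0 : ∀ i ∉ I, y i = 0)
    (hy1 : ∀ i ∈ I, (y i).1 = α i * ((p i).1 - x.1) / D)
    (hy2 : ∀ i ∈ I, (y i).2 = ((y i).1 / ((p i).1 - x.1)) • (x.2 - (p i).2)) :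
    (∑ i, (y i).1) = 1 ∧ (∑ i, (y i).2) = 0 ∧
      ∀ i, ((p i).1 - x.1) * (y i).1 + (inner ℝ ((p i).2 - x.2) (y i).2 : ℝ) = 0 :=
  stmt_9_general d m p x I hI hpos α hα1 hα2 D hD hD0 y hy0 hy1 hy2
end

section
/- Let p_1 = (p_{10}, p̄_1) and p_2 = (p_{20}, p̄_2) be two distinct points of ℝ × ℝ^d. Set x_0* = min(p_{10}, p_{20}, (p_{10} + p_{20} − ‖p̄_1 − p̄_2‖)/2) and x̄* = ((p_{10} − x_0*)·p̄_2 + (p_{20} − x_0*)·p̄_1) / ((p_{10} − x_0*) + (p_{20} − x_0*)). Then (x_0*, x̄*) is the optimal solution of Inf_Q({p_1, p_2}). -/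
/-- Closed-form solution of `Inf_Q({p₁, p₂})` for two distinct points. -/
theorem stmt_10 (d : ℕ) (hd : 1 ≤ d)
    (p₁ p₂ : ℝ × EuclideanSpace ℝ (Fin d)) (hne : p₁ ≠ p₂)
    (x₀ : ℝ)
    (hx₀ : x₀ = min p₁.1 (min p₂.1 ((p₁.1 + p₂.1 - ‖p₁.2 - p₂.2‖) / 2)))
    (xb : EuclideanSpace ℝ (Fin d))
    (hxb : xb = ((p₁.1 - x₀) + (p₂.1 - x₀))⁻¹ •
      ((p₁.1 - x₀) • p₂.2 + (p₂.1 - x₀) • p₁.2)) :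
    (‖p₁.2 - xb‖ ≤ p₁.1 - x₀ ∧ ‖p₂.2 - xb‖ ≤ p₂.1 - x₀) ∧
    ∀ y : ℝ × EuclideanSpace ℝ (Fin d),
      (‖p₁.2 - y.2‖ ≤ p₁.1 - y.1 ∧ ‖p₂.2 - y.2‖ ≤ p₂.1 - y.1) → y.1 ≤ x₀ := by
  set a := p₁.1 - x₀ with ha
  set b := p₂.1 - x₀ with hb
  have ha0 : 0 ≤ a := by
    have : x₀ ≤ p₁.1 := by rw [hx₀]; exact min_le_left _ _
    linarith
  have hb0 : 0 ≤ b := by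
    have : x₀ ≤ p₂.1 := by rw [hx₀]; exact le_trans (min_le_right _ _) (min_le_left _ _)
    linarith
  have habn : ‖p₁.2 - p₂.2‖ ≤ a + b := by
    have : x₀ ≤ (p₁.1 + p₂.1 - ‖p₁.2 - p₂.2‖) / 2 := by
      rw [hx₀]; exact le_trans (min_le_right _ _) (min_le_right _ _)
    simp only [ha, hb]; linarith
  have hab : 0 < a + b := by
    rcases lt_or_eq_of_le (by linarith : (0:ℝ) ≤ a + b) with h | h
    · exact h
    · exfalso
      have ha' : a = 0 := by linarith
      have hb' : b = 0 := by linarith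
      have h2 : p₁.2 = p₂.2 := by
        have : ‖p₁.2 - p₂.2‖ ≤ 0 := by linarith
        have := norm_nonneg (p₁.2 - p₂.2)
        have : ‖p₁.2 - p₂.2‖ = 0 := le_antisymm ‹_› ‹_›
        have := norm_sub_eq_zero_iff.mp this
        exact this
      have h1 : p₁.1 = p₂.1 := by simp only [ha, hb] at ha' hb'; linarith
      exact hne (Prod.ext h1 h2)
  have habne : a + b ≠ 0 := ne_of_gt hab
  have h1 : p₁.2 - xb = (a / (a + b)) • (p₁.2 - p₂.2) := by
    rw [hxb]
    match_scalars <;> field_simp <;> ring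
  have h2 : p₂.2 - xb = (b / (a + b)) • (p₂.2 - p₁.2) := by
    rw [hxb]
    match_scalars <;> field_simp <;> ring
  have key1 : ‖p₁.2 - xb‖ ≤ a := by
    rw [h1, norm_smul, Real.norm_eq_abs,
      abs_of_nonneg (div_nonneg ha0 (le_of_lt hab))]
    calc a / (a + b) * ‖p₁.2 - p₂.2‖ ≤ a / (a + b) * (a + b) := by
          apply mul_le_mul_of_nonneg_left habn (div_nonneg ha0 (le_of_lt hab))
      _ = a := by field_simp
  have key2 : ‖p₂.2 - xb‖ ≤ b := by
    rw [h2, norm_smul, Real.norm_eq_abs,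
      abs_of_nonneg (div_nonneg hb0 (le_of_lt hab))]
    have : ‖p₂.2 - p₁.2‖ = ‖p₁.2 - p₂.2‖ := norm_sub_rev _ _
    calc b / (a + b) * ‖p₂.2 - p₁.2‖ ≤ b / (a + b) * (a + b) := by
          rw [this]
          apply mul_le_mul_of_nonneg_left habn (div_nonneg hb0 (le_of_lt hab))
      _ = b := by field_simp
  refine ⟨⟨key1, key2⟩, ?_⟩
  rintro ⟨y₀, yb⟩ ⟨hy1, hy2⟩
  simp only at hy1 hy2 ⊢
  have htri : ‖p₁.2 - p₂.2‖ ≤ ‖p₁.2 - yb‖ + ‖p₂.2 - yb‖ := by simpa using norm_sub_le (p₁.2 - yb) (p₂.2 - yb)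
  have hn1 : (0:ℝ) ≤ ‖p₁.2 - yb‖ := norm_nonneg _
  have hn2 : (0:ℝ) ≤ ‖p₂.2 - yb‖ := norm_nonneg _
  rw [hx₀]
  refine le_min (by linarith) (le_min (by linarith) (by linarith))
end

section
/- Every support set S (for points in ℝ × ℝ^d) has at least 1 and at most d + 1 elements: 1 ≤ |S| ≤ d + 1. -/
/-- `x` is feasible for `Inf_Q(T)`. -/
def QFeasible {d : ℕ} (T : Finset (ℝ × EuclideanSpace ℝ (Fin d)))
    (x : ℝ × EuclideanSpace ℝ (Fin d)) : Prop :=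
  ∀ q ∈ T, ‖q.2 - x.2‖ ≤ q.1 - x.1

/-- `x` is optimal for `Inf_Q(T)`. -/
def QOptimal {d : ℕ} (T : Finset (ℝ × EuclideanSpace ℝ (Fin d)))
    (x : ℝ × EuclideanSpace ℝ (Fin d)) : Prop :=
  QFeasible T x ∧ ∀ y, QFeasible T y → y.1 ≤ x.1

/-- `S` is a support set: it is nonempty and no nonempty proper subset has the same
optimal value for the corresponding `Inf_Q` problem. -/
def SupportSet {d : ℕ} (S : Finset (ℝ × EuclideanSpace ℝ (Fin d))) : Prop :=
  S.Nonempty ∧ ∀ S' ⊂ S, S'.Nonempty →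
    ∀ x x', QOptimal S x → QOptimal S' x' → x'.1 ≠ x.1

/-! The feasible centres of `Inf_Q(T)` at height `t` are the points of
`⋂ p ∈ T, closedBall p̄ (p₀ - t)`, an intersection of convex sets in `ℝ^d`. If no `(d + 1)`-subset of `S` had the optimal value of `S`,
all of them would be feasible at a common height above it, and Helly's theorem would make `S`
itself feasible there. -/

open Finset Metric Filter

section

variable {d : ℕ}

lemma QFeasible.mono {T T' : Finset (ℝ × EuclideanSpace ℝ (Fin d))}
    {x : ℝ × EuclideanSpace ℝ (Fin d)} (hx : QFeasible T x) (hT' : T' ⊆ T) : QFeasible T' x :=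
  fun q hq => hx q (hT' hq)

lemma QFeasible.of_fst_le {T : Finset (ℝ × EuclideanSpace ℝ (Fin d))}
    {x : ℝ × EuclideanSpace ℝ (Fin d)} (hx : QFeasible T x) {t : ℝ} (ht : t ≤ x.1) :
    QFeasible T (t, x.2) :=
  fun q hq => (hx q hq).trans (by linarith)

lemma qFeasible_iff_mem_iInter_closedBall {T : Finset (ℝ × EuclideanSpace ℝ (Fin d))} {t : ℝ}
    {y : EuclideanSpace ℝ (Fin d)} :
    QFeasible T (t, y) ↔ y ∈ ⋂ q ∈ T, closedBall q.2 (q.1 - t) := by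
  simp [QFeasible, dist_eq_norm_sub']

lemma exists_qOptimal {T : Finset (ℝ × EuclideanSpace ℝ (Fin d))} (hT : T.Nonempty) :
    ∃ x, QOptimal T x := by
  obtain ⟨p, hp⟩ := hT
  -- the largest feasible height above `y`
  set f : EuclideanSpace ℝ (Fin d) → ℝ := fun y => T.inf' ⟨p, hp⟩ fun q => q.1 - ‖q.2 - y‖
  have hf : Continuous f := Continuous.finset_inf'_apply ⟨p, hp⟩ fun q _ => by fun_prop
  have hf_le : ∀ y, f y ≤ p.1 + ‖p.2‖ - ‖y‖ := fun y => by
    have hy : ‖y‖ - ‖p.2‖ ≤ ‖p.2 - y‖ := norm_sub_rev y p.2 ▸ norm_sub_norm_le y p.2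
    have hfy : f y ≤ p.1 - ‖p.2 - y‖ := inf'_le _ hp
    linarith
  have hf_bot : Tendsto f (cocompact _) atBot :=
    tendsto_atBot_mono hf_le <| tendsto_atBot_add_const_left _ _ <|
      tendsto_neg_atTop_atBot.comp tendsto_norm_cocompact_atTop
  obtain ⟨c, hc⟩ := hf.exists_forall_ge hf_bot
  refine ⟨(f c, c), fun q hq => ?_, fun y hy => (le_inf' _ _ fun q hq => ?_).trans (hc y.2)⟩
  · show ‖q.2 - c‖ ≤ q.1 - f c
    linarith [inf'_le (fun q => q.1 - ‖q.2 - c‖) hq]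
  · linarith [hy q hq]

lemma exists_qFeasible_of_forall_card_eq {S : Finset (ℝ × EuclideanSpace ℝ (Fin d))}
    (hS : d + 1 ≤ #S) {t : ℝ}
    (h : ∀ T ⊆ S, #T = d + 1 → ∃ y, QFeasible T (t, y)) : ∃ y, QFeasible S (t, y) := by
  simp_rw [qFeasible_iff_mem_iInter_closedBall] at h ⊢
  refine Convex.helly_theorem (𝕜 := ℝ) (by simpa using hS) (fun q _ => convex_closedBall _ _) ?_
  simpa using h

lemma exists_subset_card_eq_qOptimal {S : Finset (ℝ × EuclideanSpace ℝ (Fin d))}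
    (hS : d + 1 ≤ #S) {x : ℝ × EuclideanSpace ℝ (Fin d)} (hx : QOptimal S x) :
    ∃ T ⊆ S, #T = d + 1 ∧ QOptimal T x := by
  by_contra! hT
  have hbetter : ∀ T ∈ S.powersetCard (d + 1), ∃ y, QFeasible T y ∧ x.1 < y.1 := by
    intro T hTS
    rw [mem_powersetCard] at hTS
    simpa [QOptimal, hx.1.mono hTS.1] using hT T hTS.1 hTS.2
  choose! y hy using hbetter
  have hne : (S.powersetCard (d + 1)).Nonempty := powersetCard_nonempty.2 hS
  -- a common height above `x.1` at which every `(d + 1)`-subset is feasible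
  set t := (S.powersetCard (d + 1)).inf' hne fun T => (y T).1
  obtain ⟨z, hz⟩ : ∃ z, QFeasible S (t, z) :=
    exists_qFeasible_of_forall_card_eq hS fun T hTS hT =>
      have hT' := mem_powersetCard.2 ⟨hTS, hT⟩
      ⟨_, (hy T hT').1.of_fst_le (inf'_le _ hT')⟩
  have hxt : x.1 < t := (lt_inf'_iff _).2 fun T hT => (hy T hT).2
  exact (hx.2 _ hz).not_gt hxt

lemma SupportSet.card_le {S : Finset (ℝ × EuclideanSpace ℝ (Fin d))} (h : SupportSet S) :
    #S ≤ d + 1 := by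
  by_contra! hS
  obtain ⟨x, hx⟩ := exists_qOptimal h.1
  obtain ⟨T, hTS, hT, hTx⟩ := exists_subset_card_eq_qOptimal hS.le hx
  have hTS' : T ⊂ S := ssubset_of_subset_of_ne hTS (by rintro rfl; omega)
  exact h.2 T hTS' (card_pos.1 (by omega)) x x hx hTx rfl

end

theorem stmt_12_general (d : ℕ)
    (S : Finset (ℝ × EuclideanSpace ℝ (Fin d)))
    (h : SupportSet S) :
    1 ≤ S.card ∧ S.card ≤ d + 1 :=
  ⟨card_pos.2 h.1, h.card_le⟩

/-- Every support set has at least `1` and at most `d + 1` elements. -/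
theorem stmt_12 (d m : ℕ) (hd : 1 ≤ d) (hm : 1 ≤ m)
    (p : Fin m → ℝ × EuclideanSpace ℝ (Fin d))
    (S : Finset (ℝ × EuclideanSpace ℝ (Fin d)))
    (hS : (S : Set (ℝ × EuclideanSpace ℝ (Fin d))) ⊆ Set.range p)
    (h : SupportSet S) :
    1 ≤ S.card ∧ S.card ≤ d + 1 :=
  stmt_12_general d S h
end

section
/- Let S ⊆ P be a support set with optimal solution x^S for Inf_Q(S), and let p* = (p_0*, p̄*) be a point that is infeasible for Inf_Q(S), i.e. ‖p̄* − x̄^S‖ > p_0* − x_0^S. Then there exists a support set T ⊆ S ∪ {p*} with p* ∈ T whose optimal value for Inf_Q(T) equals the optimal value of Inf_Q(S ∪ {p*}) (i.e. T is an optimal support set for Inf_Q(S ∪ {p*}), so p* belongs to an optimal support set of that problem). -/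
/-- Strict convexity: an optimal point of `Inf_Q(S)` (for nonempty `S`) has the same
spatial part as any feasible point with the same value. -/
lemma qoptimal_spatial_eq {d : ℕ} (S : Finset (ℝ × EuclideanSpace ℝ (Fin d)))
    (hne : S.Nonempty) (a b : ℝ × EuclideanSpace ℝ (Fin d)) (ha : QOptimal S a)
    (hb : QFeasible S b) (hab1 : b.1 = a.1) : a.2 = b.2 := by
  by_contra h2
  set z : EuclideanSpace ℝ (Fin d) := (1/2 : ℝ) • a.2 + (1/2 : ℝ) • b.2 with hz
  have key : ∀ q ∈ S, ‖q.2 - z‖ < q.1 - a.1 := by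
    intro q hq
    have h1 : ‖q.2 - a.2‖ ≤ q.1 - a.1 := ha.1 q hq
    have h2' : ‖q.2 - b.2‖ ≤ q.1 - a.1 := by
      have := hb q hq; rwa [hab1] at this
    have hne' : q.2 - a.2 ≠ q.2 - b.2 := by
      intro h; exact h2 (by
        have := sub_right_injective h; exact this)
    have hzeq : q.2 - z = (1/2 : ℝ) • (q.2 - a.2) + (1/2 : ℝ) • (q.2 - b.2) := by
      rw [hz]; module
    rw [hzeq]
    exact norm_combo_lt_of_ne h1 h2' hne' (by norm_num) (by norm_num) (by norm_num)
  have hδpos : 0 < S.inf' hne (fun q => q.1 - a.1 - ‖q.2 - z‖) := by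
    rw [Finset.lt_inf'_iff]
    intro q hq
    have := key q hq; linarith
  set δ := S.inf' hne (fun q => q.1 - a.1 - ‖q.2 - z‖) with hδ
  have hfeas : QFeasible S (a.1 + δ, z) := by
    intro q hq
    have hle : δ ≤ q.1 - a.1 - ‖q.2 - z‖ := Finset.inf'_le _ hq
    simp only []
    linarith
  have := ha.2 _ hfeas
  simp only [] at this
  linarith

/-- If `S` is a support set and `p*` is infeasible for `Inf_Q(S)`, then `p*` belongs to
an optimal support set of `Inf_Q(S ∪ {p*})`. -/
theorem stmt_13 (d m : ℕ) (hd : 1 ≤ d) (hm : 1 ≤ m)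
    (p : Fin m → ℝ × EuclideanSpace ℝ (Fin d))
    (S : Finset (ℝ × EuclideanSpace ℝ (Fin d)))
    (hS : (S : Set (ℝ × EuclideanSpace ℝ (Fin d))) ⊆ Set.range p)
    (hsupp : SupportSet S)
    (xS : ℝ × EuclideanSpace ℝ (Fin d)) (hxS : QOptimal S xS)
    (pstar : ℝ × EuclideanSpace ℝ (Fin d))
    (hinf : pstar.1 - xS.1 < ‖pstar.2 - xS.2‖) :
    ∃ T : Finset (ℝ × EuclideanSpace ℝ (Fin d)),
      (T : Set (ℝ × EuclideanSpace ℝ (Fin d))) ⊆ insert pstar (S : Set _) ∧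
      pstar ∈ T ∧ SupportSet T ∧
      ∀ x x', QOptimal T x →
        (QFeasible S x' ∧ ‖pstar.2 - x'.2‖ ≤ pstar.1 - x'.1 ∧
          ∀ y, (QFeasible S y ∧ ‖pstar.2 - y.2‖ ≤ pstar.1 - y.1) → y.1 ≤ x'.1) →
        x.1 = x'.1 := by
  classical
  -- feasibility for `insert pstar S` in expanded form
  have hfeq : ∀ x : ℝ × EuclideanSpace ℝ (Fin d),
      QFeasible (insert pstar S) x ↔
        (QFeasible S x ∧ ‖pstar.2 - x.2‖ ≤ pstar.1 - x.1) := by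
    intro x
    constructor
    · intro h
      exact ⟨fun q hq => h q (Finset.mem_insert_of_mem hq),
        h pstar (Finset.mem_insert_self _ _)⟩
    · rintro ⟨h1, h2⟩ q hq
      rcases Finset.mem_insert.mp hq with rfl | hq
      · exact h2
      · exact h1 q hq
  have hoeq : ∀ x' : ℝ × EuclideanSpace ℝ (Fin d),
      (QFeasible S x' ∧ ‖pstar.2 - x'.2‖ ≤ pstar.1 - x'.1 ∧
        ∀ y, (QFeasible S y ∧ ‖pstar.2 - y.2‖ ≤ pstar.1 - y.1) → y.1 ≤ x'.1) →
      QOptimal (insert pstar S) x' := by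
    rintro x' ⟨h1, h2, h3⟩
    refine ⟨(hfeq x').mpr ⟨h1, h2⟩, fun y hy => h3 y ?_⟩
    have := (hfeq y).mp hy
    exact ⟨this.1, this.2⟩
  by_cases hex : ∃ w, QOptimal (insert pstar S) w
  · obtain ⟨w, hw⟩ := hex
    -- take a minimal subset of `insert pstar S` admitting an optimum of value `w.1`
    have hwf : WellFounded ((· < ·) : Finset (ℝ × EuclideanSpace ℝ (Fin d)) →
        Finset (ℝ × EuclideanSpace ℝ (Fin d)) → Prop) := wellFounded_lt
    obtain ⟨T, hTmem, hTmin⟩ := hwf.has_min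
      {T | T ⊆ insert pstar S ∧ ∃ x, QOptimal T x ∧ x.1 = w.1}
      ⟨insert pstar S, le_refl _, w, hw, rfl⟩
    obtain ⟨hTsub, xT, hxT, hxT1⟩ := hTmem
    -- any optimum of T has value w.1
    have hval : ∀ x, QOptimal T x → x.1 = w.1 := by
      intro x hx
      have h1 := hx.2 xT hxT.1
      have h2 := hxT.2 x hx.1
      linarith
    -- pstar ∈ T
    have hpT : pstar ∈ T := by
      by_contra hpT
      have hTS : T ⊆ S := by
        intro q hq
        rcases Finset.mem_insert.mp (hTsub hq) with rfl | h
        · exact absurd hq hpT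
        · exact h
      have hwS : QFeasible S w := ((hfeq w).mp hw.1).1
      have hw1 : w.1 ≤ xS.1 := hxS.2 w hwS
      have hxS1 : xS.1 ≤ w.1 := by
        have : QFeasible T xS := fun q hq => hxS.1 q (hTS hq)
        have := hxT.2 xS this
        linarith
      have heq : w.1 = xS.1 := le_antisymm hw1 hxS1
      have h2 := qoptimal_spatial_eq S hsupp.1 xS w hxS hwS heq
      have hpw : ‖pstar.2 - w.2‖ ≤ pstar.1 - w.1 := ((hfeq w).mp hw.1).2
      rw [← h2, heq] at hpw
      linarith
    refine ⟨T, ?_, hpT, ⟨⟨pstar, hpT⟩, ?_⟩, ?_⟩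
    · intro q hq
      simp only [Finset.mem_coe] at hq
      rcases Finset.mem_insert.mp (hTsub hq) with rfl | h
      · exact Set.mem_insert _ _
      · exact Set.mem_insert_of_mem _ h
    · -- support set property via minimality
      intro T' hT' hT'ne x x' hx hx'
      intro heq
      have hx1 : x.1 = w.1 := hval x hx
      refine hTmin T' ⟨subset_trans (subset_of_ssubset hT') hTsub, x', hx', ?_⟩ ?_
      · rw [heq, hx1]
      · exact hT'
    · intro x x'' hx hopt''
      have hx1 : x.1 = w.1 := hval x hx
      have h'' := hoeq x'' hopt''
      have h1 := h''.2 w hw.1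
      have h2 := hw.2 x'' h''.1
      linarith
  · -- no optimum for the big problem: `{pstar}` works vacuously
    refine ⟨{pstar}, ?_, Finset.mem_singleton_self _, ⟨Finset.singleton_nonempty _, ?_⟩, ?_⟩
    · intro q hq
      simp only [Finset.coe_singleton, Set.mem_singleton_iff] at hq
      rw [hq]; exact Set.mem_insert _ _
    · intro T' hT' hT'ne
      rw [Finset.ssubset_singleton_iff] at hT'
      rw [hT'] at hT'ne
      exact absurd hT'ne Finset.not_nonempty_empty
    · intro x x' hx hx'
      exact absurd ⟨x', hoeq x' hx'⟩ hex
end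

section
/- Let s ≥ 2, let p_1, …, p_s ∈ ℝ × ℝ^d, p_i = (p_{i0}, p̄_i), with p̄_1, …, p̄_s affinely independent, and let p* = (p_0*, p̄*) ∈ ℝ × ℝ^d. Let M be the d × (s−1) real matrix with columns p̄_2 − p̄_1, …, p̄_s − p̄_1 (so MᵀM is invertible), let c ∈ ℝ^{s−1} have entries c_i = p_{(i+1)0} − p_{10}, let b ∈ ℝ^{s−1} have entries b_i = (1/2)(‖p̄_{i+1}‖² − p_{(i+1)0}² − ‖p̄_1‖² + p_{10}²), and set u = (MᵀM)⁻¹(b − Mᵀp̄_1), v = (MᵀM)⁻¹c, and z = (p̄* − p̄_1) − M(MᵀM)⁻¹Mᵀ(p̄* − p̄_1). If x = (x_0, x̄) satisfies ‖p̄_i − x̄‖ = p_{i0} − x_0 for all i = 1, …, s and x̄ lies in the affine span of {p̄_1, …, p̄_s, p̄*}, then x_0 ≤ min{p_{i0} : i = 1, …, s} and there exists α* ∈ ℝ such that x̄ = M(u + x_0·v) + α*·z + p̄_1 and (α*)²·‖z‖² + ‖M(u + x_0·v)‖² − (p_{10} − x_0)² = 0. -/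
/-!
Subtracting the active constraint at `p₁` from the one at `p_{i+1}` makes it linear:
`⟪p̄_{i+1} - p̄₁, x̄⟫ = bᵢ + x₀ cᵢ`. So `x̄ - p̄₁`, which lies in `span(M) ⊕ ℝ z` with `z ⟂ span(M)`,
has the same Gram data against the columns of `M` as `M(u + x₀ v)`; hence its `span(M)`-component
is `M(u + x₀ v)`, and Pythagoras turns `‖p̄₁ - x̄‖ = p₁₀ - x₀` into the quadric equation for `α*`.
-/

open Submodule Set Finset

variable {E : Type*} [NormedAddCommGroup E] [InnerProductSpace ℝ E] {ι : Type*}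

theorem inner_sum_smul_eq_sum_inner_mul [Fintype ι] (f : ι → E) (a : ι → ℝ) (v : E) :
    inner ℝ v (∑ j, a j • f j) = ∑ j, inner ℝ v (f j) * a j := by
  simp only [inner_sum, real_inner_smul_right, mul_comm]

theorem mem_orthogonal_span_range {f : ι → E} {v : E} (h : ∀ i, inner ℝ (f i) v = 0) :
    v ∈ (span ℝ (range f))ᗮ := by
  have hortho : span ℝ {v} ⟂ span ℝ (range f) :=
    (isOrtho_span.2 (by rintro _ ⟨i, rfl⟩ _ rfl; exact h i)).symm
  exact isOrtho_iff_le.1 hortho (mem_span_singleton_self v)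

theorem sub_sum_smul_mem_orthogonal_of_gram [Fintype ι] {f : ι → E} {w : ι → ℝ} {r : E}
    (hw : ∀ i, ∑ j, inner ℝ (f i) (f j) * w j = inner ℝ (f i) r) :
    r - ∑ j, w j • f j ∈ (span ℝ (range f))ᗮ :=
  mem_orthogonal_span_range fun i => by
    rw [inner_sub_right, inner_sum_smul_eq_sum_inner_mul, hw, sub_self]

theorem eq_sum_smul_of_gram [Fintype ι] {f : ι → E} {a : ι → ℝ} {y : E}
    (hy : y ∈ span ℝ (range f)) (ha : ∀ i, ∑ j, inner ℝ (f i) (f j) * a j = inner ℝ (f i) y) :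
    y = ∑ j, a j • f j := by
  have hmem : y - ∑ j, a j • f j ∈ span ℝ (range f) :=
    sub_mem hy ((mem_span_range_iff_exists_fun ℝ).2 ⟨a, rfl⟩)
  rw [← sub_eq_zero, ← mem_bot ℝ, ← inf_orthogonal_eq_bot]
  exact ⟨hmem, sub_sum_smul_mem_orthogonal_of_gram ha⟩

theorem inner_sub_sub_eq_of_norm_sub_eq {q p x : E} {a b t : ℝ} (hq : ‖q - x‖ = a - t)
    (hp : ‖p - x‖ = b - t) :
    inner ℝ (q - p) (x - p) =
      (‖q‖ ^ 2 - a ^ 2 - ‖p‖ ^ 2 + b ^ 2) / 2 - inner ℝ (q - p) p + t * (a - b) := by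
  have hq2 := congrArg (· ^ 2) hq
  have hp2 := congrArg (· ^ 2) hp
  simp only [norm_sub_sq_real] at hq2 hp2
  rw [inner_sub_right, inner_sub_left, inner_sub_left]
  linear_combination (hp2 - hq2) / 2

theorem sub_mem_of_mem_affineSpan {s : Set E} {P x : E} {K : Submodule ℝ E} (hP : P ∈ s)
    (hs : ∀ q ∈ s, q - P ∈ K) (hx : x ∈ affineSpan ℝ s) : x - P ∈ K := by
  have hdir : x -ᵥ P ∈ vectorSpan ℝ s := by
    rw [← direction_affineSpan]
    exact AffineSubspace.vsub_mem_direction hx (mem_affineSpan ℝ hP)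
  rw [vectorSpan_eq_span_vsub_set_right ℝ hP] at hdir
  refine span_le.2 ?_ hdir
  rintro _ ⟨q, hq, rfl⟩
  exact hs q hq

theorem exists_sub_eq_add_smul_of_mem_affineSpan {k : ℕ} {q : Fin (k + 1) → E} {col : Fin k → E}
    (hcol : ∀ j, col j = q j.succ - q 0) {pstar z x : E}
    (hz : pstar - q 0 - z ∈ span ℝ (range col)) (hx : x ∈ affineSpan ℝ (range q ∪ {pstar})) :
    ∃ m ∈ span ℝ (range col), ∃ α : ℝ, x - q 0 = m + α • z := by
  have hsub : x - q 0 ∈ span ℝ (range col) ⊔ span ℝ {z} := by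
    refine sub_mem_of_mem_affineSpan (Or.inl ⟨0, rfl⟩) ?_ hx
    rintro _ (⟨i, rfl⟩ | hq)
    · cases i using Fin.cases with
      | zero => simp
      | succ j => exact mem_sup_left (hcol j ▸ subset_span (mem_range_self j))
    · rw [mem_singleton_iff.1 hq, ← sub_add_cancel (pstar - q 0) z]
      exact add_mem (mem_sup_left hz) (mem_sup_right (mem_span_singleton_self z))
  obtain ⟨m, hm, _, hzspan, hsum⟩ := mem_sup.1 hsub
  obtain ⟨α, rfl⟩ := mem_span_singleton.1 hzspan
  exact ⟨m, hm, α, hsum.symm⟩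

theorem stmt_15_general (d k : ℕ)
    (p : Fin (k + 1) → ℝ × EuclideanSpace ℝ (Fin d))
    (pstar : ℝ × EuclideanSpace ℝ (Fin d))
    (col : Fin k → EuclideanSpace ℝ (Fin d))
    (hcol : ∀ j, col j = (p j.succ).2 - (p 0).2)
    (b c : Fin k → ℝ)
    (hb : ∀ j, b j =
      (‖(p j.succ).2‖ ^ 2 - (p j.succ).1 ^ 2 - ‖(p 0).2‖ ^ 2 + (p 0).1 ^ 2) / 2)
    (hc : ∀ j, c j = (p j.succ).1 - (p 0).1)
    (u v w : Fin k → ℝ)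
    (hu : ∀ j, ∑ j', (inner ℝ (col j) (col j') : ℝ) * u j' =
      b j - (inner ℝ (col j) ((p 0).2) : ℝ))
    (hv : ∀ j, ∑ j', (inner ℝ (col j) (col j') : ℝ) * v j' = c j)
    (hw : ∀ j, ∑ j', (inner ℝ (col j) (col j') : ℝ) * w j' =
      (inner ℝ (col j) (pstar.2 - (p 0).2) : ℝ))
    (z : EuclideanSpace ℝ (Fin d))
    (hz : z = (pstar.2 - (p 0).2) - ∑ j, w j • col j)
    (x : ℝ × EuclideanSpace ℝ (Fin d))
    (hx : ∀ i, ‖(p i).2 - x.2‖ = (p i).1 - x.1)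
    (haff : x.2 ∈ affineSpan ℝ (Set.range (fun i => (p i).2) ∪ {pstar.2})) :
    (∀ i, x.1 ≤ (p i).1) ∧
    ∃ α : ℝ,
      x.2 = (∑ j, (u j + x.1 * v j) • col j) + α • z + (p 0).2 ∧
      α ^ 2 * ‖z‖ ^ 2 + ‖∑ j, (u j + x.1 * v j) • col j‖ ^ 2 -
        ((p 0).1 - x.1) ^ 2 = 0 := by
  set K := span ℝ (range col)
  set y := ∑ j, (u j + x.1 * v j) • col j
  have hzK : z ∈ Kᗮ := hz ▸ sub_sum_smul_mem_orthogonal_of_gram hw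
  have hgram : ∀ j, ∑ j', inner ℝ (col j) (col j') * (u j' + x.1 * v j') =
      inner ℝ (col j) (x.2 - (p 0).2) := fun j => by
    simp only [mul_add, sum_add_distrib, mul_left_comm _ x.1, ← mul_sum, hu, hv]
    rw [hb, hc, hcol, inner_sub_sub_eq_of_norm_sub_eq (hx j.succ) (hx 0)]
  obtain ⟨m, hm, α, hxm⟩ := exists_sub_eq_add_smul_of_mem_affineSpan (z := z) hcol
    (by rw [hz, sub_sub_cancel]; exact (mem_span_range_iff_exists_fun ℝ).2 ⟨w, rfl⟩) haff
  have hmy : m = y := eq_sum_smul_of_gram hm fun j => by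
    rw [hgram, hxm, inner_add_right, real_inner_smul_right,
      inner_right_of_mem_orthogonal (subset_span (mem_range_self j)) hzK, mul_zero, add_zero]
  subst hmy
  refine ⟨fun i => sub_nonneg.1 (hx i ▸ norm_nonneg _), α, eq_add_of_sub_eq hxm, ?_⟩
  have hpyth := norm_add_sq_eq_norm_sq_add_norm_sq_real
    (inner_right_of_mem_orthogonal hm (smul_mem _ α hzK))
  rw [← hxm, norm_sub_rev, hx 0, norm_smul, Real.norm_eq_abs] at hpyth
  linear_combination -hpyth - ‖z‖ ^ 2 * sq_abs α

/-- Points on the curve: if `x` keeps all constraints of `S = {p 0, …, p k}` active and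
`x̄` lies in the affine span of `S̄ ∪ {p̄*}`, then `x̄ = M(u + x₀ v) + α* z + p̄₁` for some
`α*` with `(α*)²‖z‖² + ‖M(u + x₀ v)‖² - (p₁₀ - x₀)² = 0`, and `x₀ ≤ min_i p_{i0}`.
Here the matrix `M` has columns `col j = p̄_{j+1} - p̄₁`, the vectors `u`, `v`, `w` are
characterized by the (invertible, since `S̄` is affinely independent) Gram system
`MᵀM u = b - Mᵀp̄₁`, `MᵀM v = c`, `MᵀM w = Mᵀ(p̄* - p̄₁)`, and
`z = (I - M(MᵀM)⁻¹Mᵀ)(p̄* - p̄₁) = (p̄* - p̄₁) - M w`. -/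
theorem stmt_15 (d k : ℕ) (hd : 1 ≤ d) (hk : 1 ≤ k)
    (p : Fin (k + 1) → ℝ × EuclideanSpace ℝ (Fin d))
    (pstar : ℝ × EuclideanSpace ℝ (Fin d))
    (hindep : AffineIndependent ℝ (fun i => (p i).2))
    (col : Fin k → EuclideanSpace ℝ (Fin d))
    (hcol : ∀ j, col j = (p j.succ).2 - (p 0).2)
    (b c : Fin k → ℝ)
    (hb : ∀ j, b j =
      (‖(p j.succ).2‖ ^ 2 - (p j.succ).1 ^ 2 - ‖(p 0).2‖ ^ 2 + (p 0).1 ^ 2) / 2)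
    (hc : ∀ j, c j = (p j.succ).1 - (p 0).1)
    (u v w : Fin k → ℝ)
    (hu : ∀ j, ∑ j', (inner ℝ (col j) (col j') : ℝ) * u j' =
      b j - (inner ℝ (col j) ((p 0).2) : ℝ))
    (hv : ∀ j, ∑ j', (inner ℝ (col j) (col j') : ℝ) * v j' = c j)
    (hw : ∀ j, ∑ j', (inner ℝ (col j) (col j') : ℝ) * w j' =
      (inner ℝ (col j) (pstar.2 - (p 0).2) : ℝ))
    (z : EuclideanSpace ℝ (Fin d))
    (hz : z = (pstar.2 - (p 0).2) - ∑ j, w j • col j)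
    (x : ℝ × EuclideanSpace ℝ (Fin d))
    (hx : ∀ i, ‖(p i).2 - x.2‖ = (p i).1 - x.1)
    (haff : x.2 ∈ affineSpan ℝ (Set.range (fun i => (p i).2) ∪ {pstar.2})) :
    (∀ i, x.1 ≤ (p i).1) ∧
    ∃ α : ℝ,
      x.2 = (∑ j, (u j + x.1 * v j) • col j) + α • z + (p 0).2 ∧
      α ^ 2 * ‖z‖ ^ 2 + ‖∑ j, (u j + x.1 * v j) • col j‖ ^ 2 -
        ((p 0).1 - x.1) ^ 2 = 0 :=
  stmt_15_general d k p pstar col hcol b c hb hc u v w hu hv hw z hz x hx haff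
end

section
/- Let c_1, …, c_m ∈ ℝ^d and r_1, …, r_m ≥ 0, and set p_i = (−r_i, c_i) ∈ ℝ × ℝ^d. Then x* = (x_0*, x̄*) is the optimal solution of Inf_Q({p_1, …, p_m}) if and only if: −x_0* ≥ 0 and the closed ball B(x̄*, −x_0*) contains the closed ball B(c_i, r_i) for every i, and every closed ball B(c, ρ) with c ∈ ℝ^d and ρ ≥ 0 that contains all the balls B(c_i, r_i) satisfies ρ ≥ −x_0*. In other words, x* solves Inf_Q({(−r_i, c_i)}) exactly when B(x̄*, −x_0*) is the smallest enclosing ball of the balls B(c_i, r_i). -/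
lemma ball_subset_iff_aux {E : Type*} [NormedAddCommGroup E] [NormedSpace ℝ E]
    [Nontrivial E] {c₁ c₂ : E} {r₁ r₂ : ℝ} (h : 0 ≤ r₁) :
    Metric.closedBall c₁ r₁ ⊆ Metric.closedBall c₂ r₂ ↔ dist c₁ c₂ + r₁ ≤ r₂ := by
  constructor
  · intro hsub
    obtain ⟨v, hv⟩ := exists_norm_eq E h
    by_cases hc : c₁ = c₂
    · subst hc
      have := hsub (show c₁ + v ∈ Metric.closedBall c₁ r₁ by
        simp [dist_eq_norm, hv])
      simpa [dist_eq_norm, hv] using this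
    · set w := c₁ - c₂
      have hw : ‖w‖ ≠ 0 := by simp [w, sub_eq_zero, hc]
      set u := c₁ + (r₁ / ‖w‖) • w
      have hu : u ∈ Metric.closedBall c₁ r₁ := by
        simp only [u, Metric.mem_closedBall, dist_eq_norm, add_sub_cancel_left,
          norm_smul, Real.norm_eq_abs, abs_div, abs_norm]
        rw [div_mul_cancel₀ _ hw]
        simp [abs_of_nonneg h]
      have := hsub hu
      have key : ‖u - c₂‖ = ‖w‖ + r₁ := by
        have : u - c₂ = (1 + r₁ / ‖w‖) • w := by
          simp [u, w]; module
        rw [this, norm_smul, Real.norm_eq_abs]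
        have hwpos : 0 < ‖w‖ := lt_of_le_of_ne (norm_nonneg _) (Ne.symm hw)
        have : 0 ≤ r₁ / ‖w‖ := div_nonneg h hwpos.le
        rw [abs_of_nonneg (by linarith)]
        field_simp
      rw [Metric.mem_closedBall, dist_eq_norm, key] at this
      simpa [dist_eq_norm, w] using this
  · intro hle
    exact Metric.closedBall_subset_closedBall' (by linarith)

/-- `x*` is the optimal solution of `Inf_Q({(-r_i, c_i)})` iff `B(x̄*, -x₀*)` is the
smallest closed ball enclosing all the balls `B(c_i, r_i)`. -/
theorem stmt_18 (d m : ℕ) (hd : 1 ≤ d) (hm : 1 ≤ m)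
    (c : Fin m → EuclideanSpace ℝ (Fin d)) (r : Fin m → ℝ) (hr : ∀ i, 0 ≤ r i)
    (x : ℝ × EuclideanSpace ℝ (Fin d)) :
    ((∀ i, ‖c i - x.2‖ ≤ -r i - x.1) ∧
      ∀ y : ℝ × EuclideanSpace ℝ (Fin d),
        (∀ i, ‖c i - y.2‖ ≤ -r i - y.1) → y.1 ≤ x.1)
    ↔ (0 ≤ -x.1 ∧
        (∀ i, Metric.closedBall (c i) (r i) ⊆ Metric.closedBall x.2 (-x.1)) ∧
        ∀ (cc : EuclideanSpace ℝ (Fin d)) (ρ : ℝ), 0 ≤ ρ →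
          (∀ i, Metric.closedBall (c i) (r i) ⊆ Metric.closedBall cc ρ) →
          -x.1 ≤ ρ) := by
  haveI : Nontrivial (EuclideanSpace ℝ (Fin d)) :=
    ⟨0, EuclideanSpace.single ⟨0, hd⟩ 1, by
      intro h
      have := congrArg (fun f => f ⟨0, hd⟩) h
      simpa using this⟩
  have i0 : Fin m := ⟨0, hm⟩
  constructor
  · rintro ⟨hfeas, hopt⟩
    have hx0 : 0 ≤ -x.1 := le_trans (hr i0) (by have := hfeas i0; have := norm_nonneg (c i0 - x.2); linarith)
    refine ⟨hx0, fun i => ?_, fun cc ρ hρ hsub => ?_⟩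
    · rw [ball_subset_iff_aux (hr i), dist_eq_norm]
      have := hfeas i; linarith
    · have hy : ∀ i, ‖c i - cc‖ ≤ -r i - (-ρ, cc).1 := by
        intro i
        have := (ball_subset_iff_aux (hr i)).1 (hsub i)
        rw [dist_eq_norm] at this
        simp only; linarith
      have := hopt (-ρ, cc) hy
      simp only at this
      linarith
  · rintro ⟨hx0, hsub, hmin⟩
    constructor
    · intro i
      have := (ball_subset_iff_aux (hr i)).1 (hsub i)
      rw [dist_eq_norm] at this; linarith
    · intro y hy
      have hy0 : 0 ≤ -y.1 :=
        le_trans (hr i0) (by have := hy i0; have := norm_nonneg (c i0 - y.2); linarith)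
      have := hmin y.2 (-y.1) hy0 (fun i => by
        rw [ball_subset_iff_aux (hr i), dist_eq_norm]
        have := hy i; linarith)
      linarith
end

section
/- Let c_1, …, c_m ∈ ℝ^d and r_1, …, r_m ≥ 0, set p_i = (r_i, c_i) ∈ ℝ × ℝ^d, and let x* = (x_0*, x̄*) be the optimal solution of Inf_Q({p_1, …, p_m}). If x_0* ≤ 0, then the closed ball B(x̄*, −x_0*) intersects the closed ball B(c_i, r_i) for every i, and every closed ball B(c, ρ) with c ∈ ℝ^d and ρ ≥ 0 that intersects all the balls B(c_i, r_i) satisfies ρ ≥ −x_0*; that is, B(x̄*, −x_0*) is a smallest ball intersecting all the balls B(c_i, r_i). -/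
/-! The closed balls `B(c, ρ)` and `B(cᵢ, rᵢ)` meet iff `‖cᵢ - c‖ ≤ rᵢ + ρ`, i.e. iff `(-ρ, c)` satisfies
the `i`-th constraint of `Inf_Q`. So the balls meeting every `B(cᵢ, rᵢ)` are exactly the feasible
points with `x₀ = -ρ ≤ 0`, and maximizing `x₀` minimizes `ρ`. -/

open Metric

theorem closedBall_inter_closedBall_nonempty_iff {E : Type*} [SeminormedAddCommGroup E]
    [NormedSpace ℝ E] {x y : E} {δ ε : ℝ} (hδ : 0 ≤ δ) (hε : 0 ≤ ε) :
    (closedBall x δ ∩ closedBall y ε).Nonempty ↔ dist x y ≤ δ + ε := by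
  rw [← Set.not_disjoint_iff_nonempty_inter, disjoint_closedBall_closedBall_iff hδ hε, not_lt]

theorem stmt_19_general (d m : ℕ)
    (c : Fin m → EuclideanSpace ℝ (Fin d)) (r : Fin m → ℝ) (hr : ∀ i, 0 ≤ r i)
    (x : ℝ × EuclideanSpace ℝ (Fin d))
    (hfeas : ∀ i, ‖c i - x.2‖ ≤ r i - x.1)
    (hopt : ∀ y : ℝ × EuclideanSpace ℝ (Fin d),
      (∀ i, ‖c i - y.2‖ ≤ r i - y.1) → y.1 ≤ x.1)
    (hx0 : x.1 ≤ 0) :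
    (∀ i, (Metric.closedBall x.2 (-x.1) ∩ Metric.closedBall (c i) (r i)).Nonempty) ∧
    ∀ (cc : EuclideanSpace ℝ (Fin d)) (ρ : ℝ), 0 ≤ ρ →
      (∀ i, (Metric.closedBall cc ρ ∩ Metric.closedBall (c i) (r i)).Nonempty) →
      -x.1 ≤ ρ := by
  have meets_iff_feasible (cc : EuclideanSpace ℝ (Fin d)) (ρ : ℝ) (i : Fin m) (hρ : 0 ≤ ρ) :
      (closedBall cc ρ ∩ closedBall (c i) (r i)).Nonempty ↔ ‖c i - cc‖ ≤ r i - -ρ := by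
    rw [closedBall_inter_closedBall_nonempty_iff hρ (hr i), dist_comm, dist_eq_norm,
      sub_neg_eq_add, add_comm ρ]
  refine ⟨fun i => ?_, fun cc ρ hρ hmeet => ?_⟩
  · rw [meets_iff_feasible x.2 (-x.1) i (neg_nonneg.2 hx0), neg_neg]
    exact hfeas i
  · exact neg_le.1 (hopt (-ρ, cc) fun i => (meets_iff_feasible cc ρ i hρ).1 (hmeet i))

/-- If `x*` is the optimal solution of `Inf_Q({(r_i, c_i)})` and `x₀* ≤ 0`, then
`B(x̄*, -x₀*)` is a smallest closed ball intersecting all the balls `B(c_i, r_i)`. -/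
theorem stmt_19 (d m : ℕ) (hd : 1 ≤ d) (hm : 1 ≤ m)
    (c : Fin m → EuclideanSpace ℝ (Fin d)) (r : Fin m → ℝ) (hr : ∀ i, 0 ≤ r i)
    (x : ℝ × EuclideanSpace ℝ (Fin d))
    (hfeas : ∀ i, ‖c i - x.2‖ ≤ r i - x.1)
    (hopt : ∀ y : ℝ × EuclideanSpace ℝ (Fin d),
      (∀ i, ‖c i - y.2‖ ≤ r i - y.1) → y.1 ≤ x.1)
    (hx0 : x.1 ≤ 0) :
    (∀ i, (Metric.closedBall x.2 (-x.1) ∩ Metric.closedBall (c i) (r i)).Nonempty) ∧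
    ∀ (cc : EuclideanSpace ℝ (Fin d)) (ρ : ℝ), 0 ≤ ρ →
      (∀ i, (Metric.closedBall cc ρ ∩ Metric.closedBall (c i) (r i)).Nonempty) →
      -x.1 ≤ ρ :=
  stmt_19_general d m c r hr x hfeas hopt hx0
end
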